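/- For all integers n ≥ 0 and r ≥ 0, the diagonal recursive relation S(n+r, r) = ((n+r)!/r!) · Σ_{k=0}^{n} ((−r)_k/(n+k)!) · Σ_{ℓ=0}^{k} (−1)^ℓ·C(n+k, k−ℓ)·S(n+ℓ, ℓ) holds for the Stirling numbers of the second kind. -/

import Mathlib

/-- The Dirichlet eta function, `η(s) = (1 - 2^(1-s)) ζ(s)` (the entire analytic
continuation of `Σ (-1)^(n-1)/n^s`). -/
noncomputable def dirichletEta (s : ℂ) : ℂ := (1 - 2 ^ ((1 : ℂ) - s)) * riemannZeta s

/-- Stirling numbers of the second kind `S(n,k)`. -/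
def stirlingS2 : ℕ → ℕ → ℕ
  | 0, 0 => 1
  | 0, _ + 1 => 0
  | _ + 1, 0 => 0
  | n + 1, k + 1 => (k + 1) * stirlingS2 n (k + 1) + stirlingS2 n k

/-- Signed Stirling numbers of the first kind `s(n,k)`, defined by
`x(x-1)⋯(x-n+1) = Σ_{k=0}^n s(n,k) x^k`. -/
def stirlingS1 : ℕ → ℕ → ℤ
  | 0, 0 => 1
  | 0, _ + 1 => 0
  | n + 1, 0 => -(n : ℤ) * stirlingS1 n 0
  | n + 1, k + 1 => stirlingS1 n k - (n : ℤ) * stirlingS1 n (k + 1)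

/-- Rising factorial (Pochhammer symbol) `(r)_k = r(r+1)⋯(r+k-1)`. -/
noncomputable def risingFactorial (r : ℝ) : ℕ → ℝ
  | 0 => 1
  | k + 1 => risingFactorial r k * (r + k)

/-- The odd double factorial `(2k-3)!!`, with conventions `(-3)!! = -1`, `(-1)!! = 1`. -/
def oddDoubleFactorial : ℕ → ℤ
  | 0 => -1
  | k + 1 => oddDoubleFactorial k * (2 * (k : ℤ) - 1)

open Finset

/-- Associated Stirling numbers of the second kind (diagonal form):
`assocS2 n k` counts partitions of an `(n+k)`-set into `k` blocks each of size `≥ 2`. -/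
def assocS2 : ℕ → ℕ → ℕ
  | 0, 0 => 1
  | 0, _ + 1 => 0
  | _ + 1, 0 => 0
  | n + 1, k + 1 => (k + 1) * assocS2 n (k + 1) + (n + k + 1) * assocS2 n k

lemma assocS2_eq_zero : ∀ n k, n < k → assocS2 n k = 0
  | 0, _+1, _ => rfl
  | n+1, k+1, h => by
      simp [assocS2, assocS2_eq_zero n (k+1) (by omega), assocS2_eq_zero n k (by omega)]

lemma stirlingS2_eq_zero : ∀ n k, n < k → stirlingS2 n k = 0
  | 0, _+1, _ => rfl
  | n+1, k+1, h => by
      simp [stirlingS2, stirlingS2_eq_zero n (k+1) (by omega), stirlingS2_eq_zero n k (by omega)]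

lemma stirlingS2_self : ∀ n, stirlingS2 n n = 1
  | 0 => rfl
  | n+1 => by simp [stirlingS2, stirlingS2_eq_zero n (n+1) (by omega), stirlingS2_self n]

lemma key (n : ℕ) : ∀ r : ℕ, stirlingS2 (n + r) r
    = ∑ k ∈ range (n + 1), (n + r).choose (n + k) * assocS2 n k := by
  induction n with
  | zero => intro r; simp [stirlingS2_self, assocS2]
  | succ n ih =>
    intro r
    induction r with
    | zero =>
      have hl : stirlingS2 (n + 1 + 0) 0 = 0 := rfl
      rw [hl]
      symm
      apply Finset.sum_eq_zero
      intro k hk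
      rcases Nat.eq_zero_or_pos k with h | h
      · subst h; simp [assocS2]
      · have : n + 1 + 0 < n + 1 + k := by omega
        simp [Nat.choose_eq_zero_of_lt this]
    | succ r ihr =>
      have hrec : stirlingS2 (n + 1 + (r + 1)) (r + 1)
          = (r + 1) * stirlingS2 (n + (r + 1)) (r + 1) + stirlingS2 (n + 1 + r) r := by
        have e1 : n + 1 + (r + 1) = (n + r + 1) + 1 := by omega
        have e2 : n + (r + 1) = n + r + 1 := by omega
        have e3 : n + 1 + r = n + r + 1 := by omega
        rw [e1, e2, e3]
        rfl
      rw [hrec, ih (r + 1), ihr]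
      -- Pascal on RHS
      have pascal : ∀ k, (n + 1 + (r + 1)).choose (n + 1 + k)
          = (n + r + 1).choose (n + k) + (n + r + 1).choose (n + 1 + k) := by
        intro k
        have e1 : n + 1 + (r + 1) = (n + r + 1) + 1 := by omega
        have e2 : n + 1 + k = (n + k) + 1 := by omega
        rw [e1, e2, Nat.choose_succ_succ]
      have hsplit : ∑ k ∈ range (n + 1 + 1), (n + 1 + (r + 1)).choose (n + 1 + k) * assocS2 (n+1) k
          = ∑ k ∈ range (n + 1 + 1), (n + r + 1).choose (n + k) * assocS2 (n+1) k
            + ∑ k ∈ range (n + 1 + 1), (n + r + 1).choose (n + 1 + k) * assocS2 (n+1) k := by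
        rw [← Finset.sum_add_distrib]
        apply Finset.sum_congr rfl
        intro k _
        rw [pascal k, Nat.add_mul]
      rw [hsplit]
      have e3 : n + 1 + r = n + r + 1 := by omega
      rw [e3]
      -- remains: (r+1) * Σ_{k≤n} C(n+r+1,n+k) b n k + X = Σ_{k≤n+1} C(n+r+1,n+k) b (n+1) k + X
      have main : ∑ k ∈ range (n + 1 + 1), (n + r + 1).choose (n + k) * assocS2 (n+1) k
          = (r + 1) * ∑ k ∈ range (n + 1), (n + (r+1)).choose (n + k) * assocS2 n k := by
        rw [Finset.sum_range_succ']
        have h0 : (n + r + 1).choose (n + 0) * assocS2 (n+1) 0 = 0 := by simp [assocS2]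
        rw [h0, Nat.add_zero]
        have hterm : ∀ j, (n + r + 1).choose (n + (j+1)) * assocS2 (n+1) (j+1)
            = (j+1) * ((n + r + 1).choose (n + (j+1)) * assocS2 n (j+1))
              + (r + 1 - j) * ((n + r + 1).choose (n + j) * assocS2 n j) := by
          intro j
          have hb : assocS2 (n+1) (j+1) = (j + 1) * assocS2 n (j + 1) + (n + j + 1) * assocS2 n j := rfl
          rw [hb, Nat.mul_add]
          congr 1
          · ring
          · -- C(n+r+1, n+j+1) * (n+j+1) = C(n+r+1, n+j) * (r+1-j)
            have := Nat.choose_succ_right_eq (n + r + 1) (n + j)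
            have e : n + r + 1 - (n + j) = r + 1 - j := by omega
            rw [e] at this
            have e2 : n + (j + 1) = n + j + 1 := by omega
            rw [e2]
            calc (n + r + 1).choose (n + j + 1) * ((n + j + 1) * assocS2 n j)
                = ((n + r + 1).choose (n + j + 1) * (n + j + 1)) * assocS2 n j := by ring
              _ = ((n + r + 1).choose (n + j) * (r + 1 - j)) * assocS2 n j := by rw [this]
              _ = (r + 1 - j) * ((n + r + 1).choose (n + j) * assocS2 n j) := by ring
        rw [Finset.sum_congr rfl (fun j _ => hterm j), Finset.sum_add_distrib]
        -- first part: Σ_{j<n+1} (j+1) * C(n+r+1,n+j+1) * b n (j+1) = Σ_{k<n+1} k * C * b n k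
        have h1 : ∑ j ∈ range (n + 1), (j+1) * ((n + r + 1).choose (n + (j+1)) * assocS2 n (j+1))
            = ∑ k ∈ range (n + 1), k * ((n + r + 1).choose (n + k) * assocS2 n k) := by
          have := Finset.sum_range_succ' (fun k => k * ((n + r + 1).choose (n + k) * assocS2 n k)) (n+1)
          rw [Finset.sum_range_succ] at this
          simp only [Nat.zero_mul, Nat.add_zero, assocS2_eq_zero n (n+1) (by omega),
            Nat.mul_zero] at this
          linarith [this]
        rw [h1, ← Finset.sum_add_distrib, Finset.mul_sum]
        apply Finset.sum_congr rfl
        intro k hk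
        have e : n + (r + 1) = n + r + 1 := by omega
        rw [e]
        by_cases hkr : k ≤ r + 1
        · have : k + (r + 1 - k) = r + 1 := by omega
          calc k * ((n + r + 1).choose (n + k) * assocS2 n k)
              + (r + 1 - k) * ((n + r + 1).choose (n + k) * assocS2 n k)
              = (k + (r + 1 - k)) * ((n + r + 1).choose (n + k) * assocS2 n k) := by ring
            _ = (r + 1) * ((n + r + 1).choose (n + k) * assocS2 n k) := by rw [this]
        · have hc : (n + r + 1).choose (n + k) = 0 := Nat.choose_eq_zero_of_lt (by omega)
          simp [hc]
      rw [main]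

lemma key_ext (n ℓ m : ℕ) (hl : ℓ < m) (hn : ℓ ≤ n) :
    stirlingS2 (n + ℓ) ℓ = ∑ j ∈ range m, (n + ℓ).choose (n + j) * assocS2 n j := by
  rw [key n ℓ]
  have trunc : ∀ M, ℓ < M → ∑ j ∈ range M, (n + ℓ).choose (n + j) * assocS2 n j
      = ∑ j ∈ range (ℓ+1), (n + ℓ).choose (n + j) * assocS2 n j := by
    intro M hM
    symm
    apply Finset.sum_subset
    · intro x hx; simp at hx ⊢; omega
    · intro x hx hx'
      simp only [Finset.mem_range] at hx hx'
      have : n + ℓ < n + x := by omega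
      simp [Nat.choose_eq_zero_of_lt this]
  rw [trunc (n+1) (by omega), trunc m hl]

lemma stirlingInner (n k : ℕ) (hk : k ≤ n) :
    ∑ ℓ ∈ range (k + 1), (-1:ℤ)^ℓ * ((n + k).choose (k - ℓ) : ℤ) * (stirlingS2 (n + ℓ) ℓ : ℤ)
      = (-1)^k * (assocS2 n k : ℤ) := by
  have step1 : ∀ ℓ ∈ range (k+1),
      (-1:ℤ)^ℓ * ((n + k).choose (k - ℓ) : ℤ) * (stirlingS2 (n + ℓ) ℓ : ℤ)
      = ∑ j ∈ range (k+1), (-1:ℤ)^ℓ * ((n + k).choose (k - ℓ) : ℤ)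
          * (((n + ℓ).choose (n + j) : ℤ) * (assocS2 n j : ℤ)) := by
    intro ℓ hl
    simp only [Finset.mem_range] at hl
    rw [← Finset.mul_sum]
    congr 1
    have := key_ext n ℓ (k+1) (by omega) (by omega)
    exact_mod_cast congrArg (Nat.cast (R := ℤ)) this
  rw [Finset.sum_congr rfl step1, Finset.sum_comm]
  have inner : ∀ j ∈ range (k+1),
      (∑ ℓ ∈ range (k+1), (-1:ℤ)^ℓ * ((n + k).choose (k - ℓ) : ℤ)
        * (((n + ℓ).choose (n + j) : ℤ) * (assocS2 n j : ℤ)))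
      = (if j = k then (-1:ℤ)^k * (assocS2 n k : ℤ) else 0) := by
    intro j hj
    simp only [Finset.mem_range] at hj
    have hjk : j ≤ k := by omega
    have hz : ∀ ℓ ∈ range (k+1), ℓ ∉ Ico j (k+1) →
        (-1:ℤ)^ℓ * ((n + k).choose (k - ℓ) : ℤ)
          * (((n + ℓ).choose (n + j) : ℤ) * (assocS2 n j : ℤ)) = 0 := by
      intro ℓ h1 h2
      simp only [Finset.mem_range] at h1
      simp only [Finset.mem_Ico] at h2
      have : (n + ℓ).choose (n + j) = 0 := Nat.choose_eq_zero_of_lt (by omega)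
      simp [this]
    rw [← Finset.sum_subset (fun x hx => by simp at hx ⊢; omega) hz]
    rw [Finset.sum_Ico_eq_sum_range]
    rw [show k + 1 - j = (k - j) + 1 by omega]
    have term : ∀ i ∈ range ((k - j) + 1),
        (-1:ℤ)^(j+i) * ((n + k).choose (k - (j+i)) : ℤ)
          * (((n + (j+i)).choose (n + j) : ℤ) * (assocS2 n j : ℤ))
        = ((-1:ℤ)^j * ((n+k).choose (n+j) : ℤ) * (assocS2 n j : ℤ))
          * ((-1:ℤ)^i * (((k-j).choose i : ℤ))) := by
      intro i hi
      simp only [Finset.mem_range] at hi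
      have hik : j + i ≤ k := by omega
      have hsym : (n + k).choose (k - (j+i)) = (n + k).choose (n + (j + i)) := by
        have h1 : k - (j+i) ≤ n + k := by omega
        have := Nat.choose_symm h1
        rw [show n + k - (k - (j+i)) = n + (j + i) by omega] at this
        exact this.symm
      have hprod : (n + k).choose (n + (j+i)) * (n + (j+i)).choose (n + j)
          = (n + k).choose (n + j) * ((k - j).choose i) := by
        have := Nat.choose_mul (n := n + k) (k := n + (j+i)) (s := n + j)
          (by omega)
        rw [show n + k - (n + j) = k - j by omega,
          show n + (j+i) - (n + j) = i by omega] at this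
        exact this
      rw [hsym]
      have : ((n + k).choose (n + (j+i)) : ℤ) * ((n + (j+i)).choose (n + j) : ℤ)
          = ((n + k).choose (n + j) : ℤ) * (((k - j).choose i : ℤ)) := by
        exact_mod_cast congrArg (Nat.cast (R := ℤ)) hprod
      calc (-1:ℤ)^(j+i) * ((n + k).choose (n + (j+i)) : ℤ)
            * (((n + (j+i)).choose (n + j) : ℤ) * (assocS2 n j : ℤ))
          = (-1:ℤ)^j * (-1:ℤ)^i * (((n + k).choose (n + (j+i)) : ℤ)
            * ((n + (j+i)).choose (n + j) : ℤ)) * (assocS2 n j : ℤ) := by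
            rw [pow_add]; ring
        _ = (-1:ℤ)^j * (-1:ℤ)^i * (((n + k).choose (n + j) : ℤ)
            * (((k - j).choose i : ℤ))) * (assocS2 n j : ℤ) := by rw [this]
        _ = ((-1:ℤ)^j * ((n+k).choose (n+j) : ℤ) * (assocS2 n j : ℤ))
            * ((-1:ℤ)^i * (((k-j).choose i : ℤ))) := by ring
    rw [Finset.sum_congr rfl term, ← Finset.mul_sum, Int.alternating_sum_range_choose]
    by_cases hjk' : j = k
    · subst hjk'
      simp [Nat.sub_self]
    · have : k - j ≠ 0 := by omega
      simp [this, hjk']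
  rw [Finset.sum_congr rfl inner, Finset.sum_ite_eq' (range (k+1)) k]
  simp

lemma rf_eq (r : ℕ) : ∀ k : ℕ, risingFactorial (-(r:ℝ)) k = (-1)^k * (r.descFactorial k : ℝ) := by
  intro k
  induction k with
  | zero => simp [risingFactorial]
  | succ k ih =>
    rw [risingFactorial, ih, Nat.descFactorial_succ]
    by_cases h : k ≤ r
    · push_cast [Nat.cast_sub h]
      ring
    · have h0 : r.descFactorial k = 0 := Nat.descFactorial_eq_zero_iff_lt.2 (by omega)
      simp [h0]

lemma coef_nat (n r k : ℕ) :
    (n + r).factorial * r.descFactorial k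
      = (n + r).choose (n + k) * r.factorial * (n + k).factorial := by
  by_cases h : k ≤ r
  · have h1 : (r - k).factorial * r.descFactorial k = r.factorial :=
      Nat.factorial_mul_descFactorial h
    have h2 : (n + r).choose (n + k) * (n + k).factorial * (n + r - (n + k)).factorial
        = (n + r).factorial := Nat.choose_mul_factorial_mul_factorial (by omega)
    rw [show n + r - (n + k) = r - k by omega] at h2
    calc (n + r).factorial * r.descFactorial k
        = ((n + r).choose (n + k) * (n + k).factorial * (r - k).factorial)
            * r.descFactorial k := by rw [h2]
      _ = (n + r).choose (n + k) * (n + k).factorial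
            * ((r - k).factorial * r.descFactorial k) := by ring
      _ = (n + r).choose (n + k) * (n + k).factorial * r.factorial := by rw [h1]
      _ = (n + r).choose (n + k) * r.factorial * (n + k).factorial := by ring
  · have h0 : r.descFactorial k = 0 := Nat.descFactorial_eq_zero_iff_lt.2 (by omega)
    have hc : (n + r).choose (n + k) = 0 := Nat.choose_eq_zero_of_lt (by omega)
    simp [h0, hc]

lemma coef_real (n r k : ℕ) :
    ((n + r).factorial : ℝ) / (r.factorial : ℝ)
      * (risingFactorial (-(r:ℝ)) k / ((n + k).factorial : ℝ)) * (-1:ℝ)^k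
      = ((n + r).choose (n + k) : ℝ) := by
  rw [rf_eq]
  have h1 : (r.factorial : ℝ) ≠ 0 := Nat.cast_ne_zero.2 (Nat.factorial_ne_zero r)
  have h2 : ((n + k).factorial : ℝ) ≠ 0 := Nat.cast_ne_zero.2 (Nat.factorial_ne_zero (n + k))
  have hneg : ((-1:ℝ)^k) * ((-1:ℝ)^k) = 1 := by
    rw [← pow_add]
    exact Even.neg_one_pow ⟨k, rfl⟩
  field_simp
  suffices hs : ((n + r).factorial : ℝ) * ((-1:ℝ)^k * (r.descFactorial k : ℝ)) * (-1:ℝ)^k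
      = ((n + r).choose (n + k) : ℝ) * ((r.factorial : ℝ) * ((n + k).factorial : ℝ)) by
    linear_combination hs
  calc ((n + r).factorial : ℝ) * ((-1:ℝ)^k * (r.descFactorial k : ℝ)) * (-1:ℝ)^k
      = (((-1:ℝ)^k) * ((-1:ℝ)^k)) * (((n + r).factorial : ℝ) * (r.descFactorial k : ℝ)) := by
        ring
    _ = ((n + r).factorial : ℝ) * (r.descFactorial k : ℝ) := by rw [hneg]; ring
    _ = ((n + r).choose (n + k) : ℝ) * ((r.factorial : ℝ) * ((n + k).factorial : ℝ)) := by
        rw [show ((n + r).factorial : ℝ) * (r.descFactorial k : ℝ)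
            = (((n + r).factorial * r.descFactorial k : ℕ) : ℝ) by push_cast; ring,
          coef_nat n r k]
        push_cast
        ring


/-- diagonal recursive relation
`S(n+r,r) = ((n+r)!/r!) Σ_{k=0}^{n} ((-r)_k/(n+k)!) Σ_{ℓ=0}^{k} (-1)^ℓ C(n+k,k-ℓ) S(n+ℓ,ℓ)`. -/
theorem stmt15 (n r : ℕ) :
    (stirlingS2 (n + r) r : ℝ) =
      (Nat.factorial (n + r) : ℝ) / (Nat.factorial r : ℝ) *
        ∑ k ∈ Finset.range (n + 1),
          risingFactorial (-(r : ℝ)) k / (Nat.factorial (n + k) : ℝ) *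
            ∑ ℓ ∈ Finset.range (k + 1),
              (-1 : ℝ) ^ ℓ * (Nat.choose (n + k) (k - ℓ) : ℝ) * (stirlingS2 (n + ℓ) ℓ : ℝ) := by
  have hinner : ∀ k ∈ Finset.range (n + 1),
      risingFactorial (-(r : ℝ)) k / (Nat.factorial (n + k) : ℝ) *
        ∑ ℓ ∈ Finset.range (k + 1),
          (-1 : ℝ) ^ ℓ * (Nat.choose (n + k) (k - ℓ) : ℝ) * (stirlingS2 (n + ℓ) ℓ : ℝ)
      = risingFactorial (-(r : ℝ)) k / (Nat.factorial (n + k) : ℝ)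
          * ((-1:ℝ)^k * (assocS2 n k : ℝ)) := by
    intro k hk
    simp only [Finset.mem_range] at hk
    congr 1
    calc (∑ ℓ ∈ Finset.range (k + 1),
          (-1 : ℝ) ^ ℓ * (Nat.choose (n + k) (k - ℓ) : ℝ) * (stirlingS2 (n + ℓ) ℓ : ℝ))
        = ((∑ ℓ ∈ Finset.range (k + 1),
            (-1:ℤ)^ℓ * ((n + k).choose (k - ℓ) : ℤ) * (stirlingS2 (n + ℓ) ℓ : ℤ) : ℤ) : ℝ) := by
          push_cast; ring
      _ = (((-1:ℤ)^k * (assocS2 n k : ℤ) : ℤ) : ℝ) := by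
          rw [stirlingInner n k (by omega)]
      _ = (-1:ℝ)^k * (assocS2 n k : ℝ) := by push_cast; ring
  rw [Finset.sum_congr rfl hinner, Finset.mul_sum, key n r]
  push_cast
  apply Finset.sum_congr rfl
  intro k hk
  calc ((n + r).choose (n + k) : ℝ) * (assocS2 n k : ℝ)
      = (((n + r).factorial : ℝ) / (r.factorial : ℝ)
          * (risingFactorial (-(r:ℝ)) k / ((n + k).factorial : ℝ)) * (-1:ℝ)^k)
          * (assocS2 n k : ℝ) := by rw [coef_real n r k]
    _ = ((n + r).factorial : ℝ) / (r.factorial : ℝ)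
          * (risingFactorial (-(r:ℝ)) k / ((n + k).factorial : ℝ)
            * ((-1:ℝ)^k * (assocS2 n k : ℝ))) := by ring
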